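/- arXiv:2412.10901 — 3 statements merged into one kernel-verified Lean document; each statement's English description precedes it below -/
import Mathlib

section
/- Let Γ = (V,E) be a directed strongly regular graph with parameters (v,k,t,λ,μ), let G be a group of automorphisms of Γ with vertex orbits O_1, …, O_b of sizes n_1, …, n_b, and for each i,j let c_{ij} = |{x ∈ O_i : (x,y) ∈ E}| for any (equivalently, every) y ∈ O_j. Then for all i,j, the entries of the column orbit matrix C = [c_{ij}] satisfy δ_{ij}(t−μ) + μ·n_i + (λ−μ)·c_{ij} = Σ_{z=1}^{b} c_{iz}·c_{zj}, where δ_{ij} is the Kronecker delta. -/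
open Matrix BigOperators

def adjM {V : Type} [Fintype V] (E : V → V → Bool) : Matrix V V ℤ :=
  Matrix.of fun x y => if E x y then 1 else 0

def IsDSRG {V : Type} [Fintype V] [DecidableEq V] (E : V → V → Bool)
    (v k t l m : ℕ) : Prop :=
  Fintype.card V = v ∧ (∀ x, E x x = false) ∧
  adjM E * adjM E + ((m : ℤ) - (l : ℤ)) • adjM E - ((t : ℤ) - (m : ℤ)) • (1 : Matrix V V ℤ)
    = (m : ℤ) • Matrix.of (fun _ _ => (1 : ℤ)) ∧
  adjM E * Matrix.of (fun _ _ => (1 : ℤ)) = (k : ℤ) • Matrix.of (fun _ _ => (1 : ℤ)) ∧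
  Matrix.of (fun _ _ => (1 : ℤ)) * adjM E = (k : ℤ) • Matrix.of (fun _ _ => (1 : ℤ))

def IsAut {V : Type} (E : V → V → Bool) (σ : Equiv.Perm V) : Prop :=
  ∀ x y, E (σ x) (σ y) = E x y

def autGroup {V : Type} (E : V → V → Bool) : Subgroup (Equiv.Perm V) where
  carrier := {σ | ∀ x y, E (σ x) (σ y) = E x y}
  one_mem' := fun _ _ => rfl
  mul_mem' := by
    intro a b ha hb x y
    simp only [Equiv.Perm.coe_mul, Function.comp_apply]
    rw [ha, hb]
  inv_mem' := by
    intro a ha x y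
    have := ha (a⁻¹ x) (a⁻¹ y)
    simpa using this.symm

def Iso {V W : Type} (E : V → V → Bool) (F : W → W → Bool) : Prop :=
  ∃ φ : V ≃ W, ∀ x y, F (φ x) (φ y) = E x y

/-!
Let `S` be the characteristic matrix of the orbit partition (`S i x = 1` iff `x ∈ O_i`) and
`C = [c i j]`. Counting in-neighbours orbitwise is exactly the intertwining relation `S A = C S`,
so multiplying the DSRG equation `A² + (μ - λ) A - (t - μ) I = μ J` on the left by `S` gives
`(C² + (μ - λ) C - (t - μ) I) S = μ S J`. Its entry at `(i, rep j)` is the claimed identity,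
because `S` has a single `1` in column `rep j`, in row `j`, and `(S J) i x = n_i`.
-/

def blockIndicator {V ι : Type*} [DecidableEq ι] (R : Type*) [Semiring R] (p : V → ι) :
    Matrix ι V R :=
  Matrix.of fun i x => if p x = i then 1 else 0

section BlockIndicator

variable {V ι n R : Type*} [DecidableEq ι]

theorem blockIndicator_mul_apply [Fintype V] [Semiring R] (p : V → ι) (A : Matrix V n R)
    (i : ι) (y : n) : (blockIndicator R p * A) i y = ∑ x with p x = i, A x y := by
  simp [blockIndicator, Matrix.mul_apply, Finset.sum_filter]

theorem mul_blockIndicator_apply [Fintype ι] [Semiring R] (p : V → ι) (C : Matrix n ι R)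
    (x : n) (y : V) : (C * blockIndicator R p) x y = C x (p y) := by
  simp [blockIndicator, Matrix.mul_apply]

theorem blockIndicator_mul_eq_mul_blockIndicator [Fintype V] [Fintype ι] [Semiring R]
    {p : V → ι} {A : Matrix V V R} {C : Matrix ι ι R}
    (hA : ∀ i y, ∑ x with p x = i, A x y = C i (p y)) :
    blockIndicator R p * A = C * blockIndicator R p := by
  ext i y
  rw [blockIndicator_mul_apply, mul_blockIndicator_apply, hA]

theorem blockIndicator_mul_quadratic [Fintype V] [Fintype ι] [DecidableEq V] [CommRing R]
    {p : V → ι} {A : Matrix V V R} {C : Matrix ι ι R}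
    (hSA : blockIndicator R p * A = C * blockIndicator R p) (a s : R) :
    blockIndicator R p * (A * A + a • A - s • 1)
      = (C * C + a • C - s • 1) * blockIndicator R p := by
  simp only [Matrix.mul_add, Matrix.mul_sub, Matrix.add_mul, Matrix.sub_mul, Matrix.mul_smul,
    Matrix.smul_mul, Matrix.mul_one, Matrix.one_mul, ← Matrix.mul_assoc, hSA]
  simp only [Matrix.mul_assoc, hSA]

end BlockIndicator

theorem MulAction.eq_of_mem_orbit_rep {G α ι : Type*} [Group G] [MulAction G α] {rep : ι → α}
    (hrep : Function.Injective fun i => MulAction.orbit G (rep i)) {x : α} {i j : ι}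
    (hi : x ∈ MulAction.orbit G (rep i)) (hj : x ∈ MulAction.orbit G (rep j)) : i = j :=
  hrep ((MulAction.orbit_eq_iff.2 hi).symm.trans (MulAction.orbit_eq_iff.2 hj))

theorem sum_filter_adjM_apply_eq_ncard {V : Type} [Fintype V] (E : V → V → Bool)
    (P : V → Prop) [DecidablePred P] (y : V) :
    ∑ x with P x, adjM E x y = ({x | P x ∧ E x y = true}.ncard : ℤ) := by
  simp only [adjM, Matrix.of_apply, Finset.sum_boole, Finset.filter_filter]
  rw [← Set.ncard_coe_finset, Finset.coe_filter]
  simp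

theorem columnOrbitMatrix_equation_general {V : Type} [Fintype V] [DecidableEq V]
    (E : V → V → Bool) (v k t l m : ℕ) (hG : IsDSRG E v k t l m)
    (G : Subgroup (Equiv.Perm V))
    (b : ℕ) (rep : Fin b → V)
    (hcover : ∀ x : V, ∃ i, x ∈ MulAction.orbit G (rep i))
    (hdistinct : ∀ i j : Fin b,
      MulAction.orbit G (rep i) = MulAction.orbit G (rep j) → i = j)
    (c : Fin b → Fin b → ℕ)
    (hc : ∀ i j : Fin b, ∀ y ∈ MulAction.orbit G (rep j),
        Set.ncard {x ∈ MulAction.orbit G (rep i) | E x y = true} = c i j)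
    (i j : Fin b) :
    (if i = j then ((t : ℤ) - (m : ℤ)) else 0)
      + (m : ℤ) * (Set.ncard (MulAction.orbit G (rep i)) : ℤ)
      + ((l : ℤ) - (m : ℤ)) * (c i j : ℤ)
      = ∑ z : Fin b, (c i z : ℤ) * (c z j : ℤ) := by
  obtain ⟨-, -, hsrg, -, -⟩ := hG
  choose p hp using hcover
  have hblock : ∀ x i, p x = i ↔ x ∈ MulAction.orbit G (rep i) := fun x i =>
    ⟨by rintro rfl; exact hp x, MulAction.eq_of_mem_orbit_rep hdistinct (hp x)⟩
  let C : Matrix (Fin b) (Fin b) ℤ := Matrix.of fun i j => c i j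
  have hSA : blockIndicator ℤ p * adjM E = C * blockIndicator ℤ p :=
    blockIndicator_mul_eq_mul_blockIndicator fun i y => by
      rw [sum_filter_adjM_apply_eq_ncard, show C i (p y) = c i (p y) from rfl,
        ← hc i (p y) y (hp y)]
      simp only [hblock]
  have key : (C * C + ((m : ℤ) - l) • C - ((t : ℤ) - m) • 1) * blockIndicator ℤ p
      = (m : ℤ) • (blockIndicator ℤ p * (Matrix.of fun _ _ => 1 : Matrix V V ℤ)) :=
    ((blockIndicator_mul_quadratic hSA _ _).symm.trans (congrArg _ hsrg)).trans
      (Matrix.mul_smul _ _ _)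
  have hsize : ∑ x with p x = i, (1 : ℤ) = (MulAction.orbit G (rep i)).ncard := by
    rw [Finset.sum_const, nsmul_one, ← Set.ncard_coe_finset, Finset.coe_filter]
    simp only [Finset.mem_univ, true_and, hblock, Set.ofPred_mem_eq]
  have hpj : p (rep j) = j := (hblock _ _).2 (MulAction.mem_orbit_self _)
  have entry := congrFun₂ key i (rep j)
  rw [mul_blockIndicator_apply, hpj, Matrix.smul_apply, blockIndicator_mul_apply] at entry
  simp only [Matrix.sub_apply, Matrix.add_apply, Matrix.smul_apply, Matrix.mul_apply,
    Matrix.one_apply, smul_eq_mul, Matrix.of_apply, C, hsize] at entry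
  split_ifs at entry ⊢ <;> linarith

/-- the entries of the column orbit matrix `C = [c i j]` of a DSRG with
respect to an automorphism group `G` with orbits `orbit G (rep 1), …, orbit G (rep b)`
satisfy `δ_{ij}(t−μ) + μ·n_i + (λ−μ)·c_{ij} = Σ_z c_{iz}·c_{zj}`. -/
theorem columnOrbitMatrix_equation {V : Type} [Fintype V] [DecidableEq V]
    (E : V → V → Bool) (v k t l m : ℕ) (hG : IsDSRG E v k t l m)
    (G : Subgroup (Equiv.Perm V)) (hAut : ∀ σ ∈ G, IsAut E σ)
    (b : ℕ) (rep : Fin b → V)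
    (hcover : ∀ x : V, ∃ i, x ∈ MulAction.orbit G (rep i))
    (hdistinct : ∀ i j : Fin b,
      MulAction.orbit G (rep i) = MulAction.orbit G (rep j) → i = j)
    (c : Fin b → Fin b → ℕ)
    (hc : ∀ i j : Fin b, ∀ y ∈ MulAction.orbit G (rep j),
        Set.ncard {x ∈ MulAction.orbit G (rep i) | E x y = true} = c i j)
    (i j : Fin b) :
    (if i = j then ((t : ℤ) - (m : ℤ)) else 0)
      + (m : ℤ) * (Set.ncard (MulAction.orbit G (rep i)) : ℤ)
      + ((l : ℤ) - (m : ℤ)) * (c i j : ℤ)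
      = ∑ z : Fin b, (c i z : ℤ) * (c z j : ℤ) :=
  columnOrbitMatrix_equation_general E v k t l m hG G b rep hcover hdistinct c hc i j
end

section
/- No directed strongly regular graph with parameters (22,9,6,3,4) admits an automorphism of order 13, an automorphism of order 17, or an automorphism of order 19. -/
open Matrix BigOperators

/-!
Let `σ` be an automorphism of prime order `p ∈ {13, 17, 19}`. Since `22 < 2p`, `σ` is a single
`p`-cycle, so it fixes `22 - p ≥ 1` vertices. The out-neighbourhood of a fixed vertex `x` is
`σ`-invariant and has `9 < p` elements, so it is fixed pointwise; together with `x` this gives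
`10 ≤ 22 - p` fixed vertices, i.e. `p ≤ 12`.
-/

namespace Equiv.Perm

variable {α : Type*} [DecidableEq α]

/-- The restriction of `σ` to `s` has order dividing both `p` and `s.card !`. -/
theorem apply_eq_self_of_mem_of_card_lt {σ : Perm α} {p : ℕ} (hp : p.Prime) (hσ : σ ^ p = 1)
    {s : Finset α} (hs : ∀ x, σ x ∈ s ↔ x ∈ s) (hcard : s.card < p) {x : α} (hx : x ∈ s) :
    σ x = x := by
  set τ : Perm s := σ.subtypePerm hs
  have hτp : orderOf τ ∣ p :=
    orderOf_dvd_of_pow_eq_one (by simp only [τ, subtypePerm_pow, hσ]; rfl)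
  have hτfact : orderOf τ ∣ s.card.factorial := by
    simpa only [Fintype.card_perm, Fintype.card_coe] using orderOf_dvd_card (x := τ)
  have hτ : τ = 1 := by
    rcases (Nat.dvd_prime hp).mp hτp with h | h
    · exact orderOf_eq_one_iff.mp h
    · exact absurd ((hp.dvd_factorial).mp (h ▸ hτfact)) hcard.not_ge
  simpa [τ] using congrArg Subtype.val (Perm.ext_iff.mp hτ ⟨x, hx⟩)

end Equiv.Perm

section Digraph

variable {V : Type} [Fintype V]

def outNbhd (E : V → V → Bool) (x : V) : Finset V :=
  {y | E x y}

theorem card_outNbhd_of_isDSRG [DecidableEq V] {E : V → V → Bool} {v k t l m : ℕ}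
    (hG : IsDSRG E v k t l m) (x : V) : (outNbhd E x).card = k := by
  have h := congrFun (congrFun hG.2.2.2.1 x) x
  simp only [Matrix.mul_apply, Matrix.smul_apply, Matrix.of_apply, adjM, smul_eq_mul, mul_one,
    Finset.sum_boole] at h
  exact_mod_cast h

theorem IsAut.apply_mem_outNbhd_iff {E : V → V → Bool} {σ : Equiv.Perm V} (hσ : IsAut E σ)
    {x : V} (hx : σ x = x) (y : V) : σ y ∈ outNbhd E x ↔ y ∈ outNbhd E x := by
  simp only [outNbhd, Finset.mem_filter, Finset.mem_univ, true_and]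
  rw [← hx, hσ, hx]

variable [DecidableEq V]

theorem IsDSRG.card_add_card_support_le {E : V → V → Bool} {v k t l m : ℕ}
    (hG : IsDSRG E v k t l m) {σ : Equiv.Perm V} (hσ : IsAut E σ) {p : ℕ} (hp : p.Prime)
    (hσp : σ ^ p = 1) (hkp : k < p) {x : V} (hx : σ x = x) :
    k + 1 + σ.support.card ≤ v := by
  have hfixed : insert x (outNbhd E x) ⊆ σ.supportᶜ := by
    intro y hy
    rw [Finset.mem_compl, Equiv.Perm.mem_support, not_not]
    rcases Finset.mem_insert.mp hy with rfl | hy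
    · exact hx
    · exact σ.apply_eq_self_of_mem_of_card_lt hp hσp (hσ.apply_mem_outNbhd_iff hx)
        (card_outNbhd_of_isDSRG hG x ▸ hkp) hy
  have hx_out : x ∉ outNbhd E x := by simp [outNbhd, hG.2.1 x]
  have := Finset.card_le_card hfixed
  rw [Finset.card_insert_of_notMem hx_out, card_outNbhd_of_isDSRG hG x, Finset.card_compl,
    hG.1] at this
  have := σ.support.card_le_univ
  rw [hG.1] at this
  omega

theorem IsDSRG.orderOf_ne {E : V → V → Bool} {v k t l m : ℕ} (hG : IsDSRG E v k t l m)
    {σ : Equiv.Perm V} (hσ : IsAut E σ) {p : ℕ} (hp : p.Prime) (hkp : k < p) (hpv : p < v)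
    (hv : v < 2 * p) (hvk : v < k + 1 + p) : orderOf σ ≠ p := by
  intro hσp
  have hcycle := Equiv.Perm.isCycle_of_prime_order' (hσp ▸ hp) (by rwa [hσp, hG.1])
  have hsupport : σ.support.card = p := hcycle.orderOf.symm.trans hσp
  obtain ⟨x, hx⟩ : σ.supportᶜ.Nonempty := by
    rw [← Finset.card_pos, Finset.card_compl, hG.1]
    omega
  have := hG.card_add_card_support_le hσ hp (hσp ▸ pow_orderOf_eq_one σ) hkp
    (Equiv.Perm.notMem_support.mp (Finset.mem_compl.mp hx))
  omega

end Digraph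

/-- no DSRG(22,9,6,3,4) admits an automorphism of order 13, 17 or 19. -/
theorem no_automorphism_of_order_13_17_19 {V : Type} [Fintype V] [DecidableEq V]
    (E : V → V → Bool) (hG : IsDSRG E 22 9 6 3 4)
    (σ : Equiv.Perm V) (hσ : IsAut E σ) :
    orderOf σ ≠ 13 ∧ orderOf σ ≠ 17 ∧ orderOf σ ≠ 19 :=
  ⟨hG.orderOf_ne hσ (by norm_num) (by norm_num) (by norm_num) (by norm_num) (by norm_num),
    hG.orderOf_ne hσ (by norm_num) (by norm_num) (by norm_num) (by norm_num) (by norm_num),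
    hG.orderOf_ne hσ (by norm_num) (by norm_num) (by norm_num) (by norm_num) (by norm_num)⟩
end

section
/- There exists a directed strongly regular graph with parameters (22,9,6,3,4). -/
/-! Comparing the matrix identity entrywise, a directed strongly regular graph is a loopless
digraph in which every vertex has in- and out-degree `k` and the number of paths `x → z → y` is
`t`, `λ` or `μ` according as `x = y`, `x → y` or neither (Duval's original definition). These
counts are checked by evaluation on an explicit digraph; its automorphism group is trivial, so it
admits no shorter description by symmetry. -/

open Matrix BigOperators

open Finset

section
variable {V : Type} [Fintype V] (E : V → V → Bool)

theorem adjM_mul_adjM_apply (x y : V) :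
    (adjM E * adjM E) x y = #{z | E x z ∧ E z y} := by
  simp only [adjM, mul_apply, of_apply, mul_ite, mul_one, mul_zero, ← ite_and, sum_boole, and_comm]

theorem adjM_mul_ones_apply (x y : V) :
    (adjM E * of fun _ _ => 1 : Matrix V V ℤ) x y = #{z | E x z} := by
  simp only [adjM, mul_apply, of_apply, mul_one, sum_boole]

theorem ones_mul_adjM_apply (x y : V) :
    (of (fun _ _ => 1) * adjM E : Matrix V V ℤ) x y = #{z | E z y} := by
  simp only [adjM, mul_apply, of_apply, one_mul, sum_boole]

theorem isDSRG_iff [DecidableEq V] {v k t l m : ℕ} :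
    IsDSRG E v k t l m ↔ Fintype.card V = v ∧ (∀ x, E x x = false) ∧
      (∀ x y, #{z | E x z ∧ E z y} = if x = y then t else if E x y then l else m) ∧
      (∀ x, #{y | E x y} = k) ∧ (∀ y, #{x | E x y} = k) := by
  refine and_congr_right fun _ => and_congr_right fun hloop => and_congr ?_ (and_congr ?_ ?_) <;>
    rw [← Matrix.ext_iff]
  · refine forall₂_congr fun x y => ?_
    rw [Matrix.sub_apply, Matrix.add_apply, Matrix.smul_apply, Matrix.smul_apply,
      Matrix.smul_apply, adjM_mul_adjM_apply]
    by_cases hxy : x = y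
    · subst hxy
      simp only [adjM, of_apply, hloop, Bool.false_eq_true, ↓reduceIte, Int.zsmul_eq_mul, mul_zero,
        add_zero, one_apply_eq, mul_one]
      omega
    · by_cases hE : E x y
      · simp only [adjM, of_apply, hE, ↓reduceIte, Int.zsmul_eq_mul, mul_one, ne_eq, hxy,
          not_false_eq_true, one_apply_ne, mul_zero, sub_zero]
        omega
      · simp [adjM, hxy, hE]
  · refine forall_congr' fun x => ⟨fun h => ?_, fun h y => ?_⟩
    · simpa [adjM_mul_ones_apply] using h x
    · simp [adjM_mul_ones_apply, h]
  · rw [forall_comm]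
    refine forall_congr' fun y => ⟨fun h => ?_, fun h x => ?_⟩
    · simpa [ones_mul_adjM_apply] using h y
    · simp [ones_mul_adjM_apply, h]
end

def dsrg22Table : Matrix (Fin 22) (Fin 22) ℕ := !![
    0, 0, 1, 0, 1, 0, 0, 1, 1, 0, 0, 1, 1, 0, 0, 1, 1, 0, 0, 0, 1, 0;
    1, 0, 0, 0, 0, 1, 0, 1, 0, 1, 1, 0, 1, 1, 0, 0, 0, 0, 1, 0, 1, 0;
    1, 0, 0, 0, 0, 1, 0, 0, 0, 1, 1, 0, 1, 1, 1, 0, 0, 1, 1, 0, 0, 0;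
    0, 0, 0, 0, 1, 0, 1, 0, 1, 0, 0, 1, 1, 0, 0, 1, 1, 0, 0, 1, 0, 1;
    1, 0, 1, 0, 0, 0, 0, 1, 1, 0, 0, 1, 1, 1, 0, 0, 0, 0, 0, 0, 1, 1;
    0, 1, 0, 1, 0, 0, 1, 0, 0, 0, 1, 0, 0, 1, 1, 0, 1, 1, 0, 0, 0, 1;
    0, 1, 0, 1, 0, 1, 0, 0, 0, 0, 0, 0, 0, 1, 1, 1, 1, 1, 1, 0, 0, 0;
    0, 1, 0, 0, 1, 0, 1, 0, 1, 0, 0, 0, 0, 0, 0, 1, 1, 1, 0, 1, 0, 1;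
    0, 0, 0, 1, 1, 0, 1, 1, 0, 0, 0, 0, 0, 0, 1, 1, 1, 0, 0, 1, 0, 1;
    0, 1, 1, 1, 0, 0, 0, 1, 0, 0, 0, 1, 0, 0, 1, 0, 1, 0, 1, 1, 0, 0;
    1, 0, 0, 0, 0, 1, 0, 0, 1, 0, 0, 0, 1, 0, 0, 1, 0, 1, 0, 1, 1, 1;
    0, 0, 0, 1, 1, 0, 1, 0, 0, 0, 0, 0, 0, 0, 0, 1, 1, 1, 0, 1, 1, 1;
    1, 1, 1, 1, 0, 1, 0, 0, 0, 1, 1, 0, 0, 1, 0, 0, 0, 0, 1, 0, 0, 0;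
    0, 1, 1, 1, 1, 0, 1, 0, 1, 0, 0, 0, 0, 0, 0, 0, 0, 1, 0, 1, 1, 0;
    1, 0, 1, 0, 0, 1, 0, 0, 1, 1, 1, 0, 0, 1, 0, 0, 0, 0, 1, 0, 1, 0;
    1, 0, 0, 0, 0, 0, 1, 0, 1, 0, 1, 0, 1, 0, 0, 0, 0, 1, 1, 1, 1, 0;
    1, 1, 1, 1, 0, 1, 0, 1, 0, 1, 0, 1, 0, 0, 1, 0, 0, 0, 0, 0, 0, 0;
    0, 0, 1, 0, 1, 0, 1, 1, 0, 0, 0, 1, 0, 0, 0, 1, 1, 0, 0, 1, 0, 1;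
    0, 0, 0, 0, 1, 0, 1, 1, 0, 1, 0, 1, 1, 0, 1, 1, 0, 0, 0, 0, 0, 1;
    0, 1, 1, 1, 0, 0, 0, 0, 1, 1, 1, 0, 0, 1, 0, 0, 0, 1, 0, 0, 1, 0;
    1, 1, 0, 0, 0, 1, 0, 0, 0, 1, 1, 1, 0, 1, 1, 0, 0, 0, 1, 0, 0, 0;
    0, 0, 0, 0, 1, 1, 0, 1, 0, 1, 1, 1, 1, 0, 1, 0, 0, 0, 1, 0, 0, 0]

def dsrg22 (x y : Fin 22) : Bool := dsrg22Table x y = 1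

theorem dsrg22_isDSRG : IsDSRG dsrg22 22 9 6 3 4 :=
  (isDSRG_iff dsrg22).2 (by decide)

/-- there exists a directed strongly regular graph with parameters
(22,9,6,3,4). -/
theorem exists_DSRG_22_9_6_3_4 :
    ∃ E : Fin 22 → Fin 22 → Bool, IsDSRG E 22 9 6 3 4 :=
  ⟨dsrg22, dsrg22_isDSRG⟩
end
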